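/- Let p > 2 be a real number. Then f(u) tends to 0 as u tends to 1 from within the open interval (0,1). -/

import Mathlib

/-!
Put `t = 1 - u` and `q = p / (p - 1) ∈ (1, 2)`. The numerator of `f` is `O(t ^ p)`, while the
denominator is at least `t ^ q - 4 t ^ p`, because `1 - u ^ (p - 1) ≥ t`. Since `q < p`, the
denominator is eventually at least `t ^ q / 2`, so `0 ≤ f ≤ 8 · 2 ^ p · t ^ (p - q) → 0`.
-/

/-- The function f from Lemma 1 of the paper. -/
noncomputable def f (p u : ℝ) : ℝ :=
  (1 - u ^ (2:ℝ)) ^ p / (1 + u ^ p) *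
    ((1 + u ^ (p - 1)) ^ (p / (p - 1)) - (1 - u ^ (p - 1)) ^ (p / (p - 1))) /
    ((1 + u) ^ p * (1 - u ^ (p - 1)) ^ (p / (p - 1)) -
      (1 - u) ^ p * (1 + u ^ (p - 1)) ^ (p / (p - 1)))

open Real Filter Topology Set

lemma tendsto_one_sub_rpow_nhds_one {δ : ℝ} (hδ : 0 < δ) :
    Tendsto (fun u : ℝ => (1 - u) ^ δ) (𝓝 1) (𝓝 0) := by
  have h : Continuous fun u : ℝ => (1 - u) ^ δ :=
    (continuous_const.sub continuous_id).rpow_const fun _ => Or.inr hδ.le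
  simpa [zero_rpow hδ.ne'] using h.tendsto 1

lemma div_sub_one_pos {p : ℝ} (hp : 1 < p) : 0 < p / (p - 1) :=
  div_pos (by linarith) (by linarith)

lemma div_sub_one_lt_two {p : ℝ} (hp : 2 < p) : p / (p - 1) < 2 := by
  rw [div_lt_iff₀ (by linarith)]
  linarith

lemma div_sub_one_lt_self {p : ℝ} (hp : 2 < p) : p / (p - 1) < p :=
  (div_sub_one_lt_two hp).trans hp

section Bounds

variable {a p q u : ℝ}

lemma one_add_rpow_le_four (ha0 : 0 ≤ a) (ha1 : a ≤ 1) (hq0 : 0 ≤ q) (hq2 : q ≤ 2) :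
    (1 + a) ^ q ≤ 4 :=
  calc (1 + a) ^ q ≤ 2 ^ q := rpow_le_rpow (by linarith) (by linarith) hq0
    _ ≤ 2 ^ (2 : ℝ) := rpow_le_rpow_of_exponent_le (by norm_num) hq2
    _ = 4 := by norm_num

lemma one_sub_sq_rpow_div_le (hu0 : 0 ≤ u) (hu1 : u ≤ 1) (hp : 0 ≤ p) :
    (1 - u ^ (2 : ℝ)) ^ p / (1 + u ^ p) ≤ 2 ^ p * (1 - u) ^ p := by
  have hfactor : 1 - u ^ (2 : ℝ) = (1 - u) * (1 + u) := by rw [rpow_two]; ring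
  have hle : (1 - u ^ (2 : ℝ)) ^ p ≤ 2 ^ p * (1 - u) ^ p := by
    rw [← mul_rpow (by norm_num) (by linarith), hfactor]
    exact rpow_le_rpow (by nlinarith) (by nlinarith) hp
  exact (div_le_self (rpow_nonneg (by rw [hfactor]; nlinarith) p)
    (le_add_of_nonneg_right (rpow_nonneg hu0 p))).trans hle

lemma sub_rpow_le_denominator (ha0 : 0 ≤ a) (hau : a ≤ u) (hu1 : u ≤ 1)
    (hp : 0 ≤ p) (hq0 : 0 ≤ q) (hq2 : q ≤ 2) :
    (1 - u) ^ q - 4 * (1 - u) ^ p ≤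
      (1 + u) ^ p * (1 - a) ^ q - (1 - u) ^ p * (1 + a) ^ q := by
  have hb : (1 - u) ^ q ≤ (1 + u) ^ p * (1 - a) ^ q :=
    (rpow_le_rpow (by linarith) (by linarith) hq0).trans
      (le_mul_of_one_le_left (rpow_nonneg (by linarith) q) (one_le_rpow (by linarith) hp))
  have hc : (1 - u) ^ p * (1 + a) ^ q ≤ (1 - u) ^ p * 4 :=
    mul_le_mul_of_nonneg_left (one_add_rpow_le_four ha0 (hau.trans hu1) hq0 hq2)
      (rpow_nonneg (by linarith) p)
  linarith

variable (hp : 2 < p) (hu0 : 0 < u) (hu1 : u < 1)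
include hp hu0 hu1

lemma f_numerator_nonneg_and_le :
    0 ≤ (1 - u ^ (2 : ℝ)) ^ p / (1 + u ^ p) *
        ((1 + u ^ (p - 1)) ^ (p / (p - 1)) - (1 - u ^ (p - 1)) ^ (p / (p - 1))) ∧
      (1 - u ^ (2 : ℝ)) ^ p / (1 + u ^ p) *
        ((1 + u ^ (p - 1)) ^ (p / (p - 1)) - (1 - u ^ (p - 1)) ^ (p / (p - 1))) ≤
      2 ^ p * (1 - u) ^ p * 4 := by
  have ha0 : 0 ≤ u ^ (p - 1) := rpow_nonneg hu0.le _
  have ha1 : u ^ (p - 1) ≤ 1 := rpow_le_one hu0.le hu1.le (by linarith)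
  have hq0 := (div_sub_one_pos (by linarith : 1 < p)).le
  have hpre0 : 0 ≤ (1 - u ^ (2 : ℝ)) ^ p / (1 + u ^ p) :=
    div_nonneg (rpow_nonneg (by rw [rpow_two]; nlinarith) p) (by positivity)
  have hdiff0 : 0 ≤ (1 + u ^ (p - 1)) ^ (p / (p - 1)) - (1 - u ^ (p - 1)) ^ (p / (p - 1)) :=
    sub_nonneg.2 (rpow_le_rpow (by linarith) (by linarith) hq0)
  have hdiff4 : (1 + u ^ (p - 1)) ^ (p / (p - 1)) - (1 - u ^ (p - 1)) ^ (p / (p - 1)) ≤ 4 :=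
    (sub_le_self _ (rpow_nonneg (by linarith) _)).trans
      (one_add_rpow_le_four ha0 ha1 hq0 (div_sub_one_lt_two hp).le)
  exact ⟨mul_nonneg hpre0 hdiff0, mul_le_mul (one_sub_sq_rpow_div_le hu0.le hu1.le (by linarith))
    hdiff4 hdiff0 (by positivity)⟩

lemma half_rpow_le_f_denominator (hsmall : (1 - u) ^ (p - p / (p - 1)) ≤ 1 / 8) :
    (1 - u) ^ (p / (p - 1)) / 2 ≤
      (1 + u) ^ p * (1 - u ^ (p - 1)) ^ (p / (p - 1)) -
        (1 - u) ^ p * (1 + u ^ (p - 1)) ^ (p / (p - 1)) := by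
  have hsplit : (1 - u) ^ p = (1 - u) ^ (p / (p - 1)) * (1 - u) ^ (p - p / (p - 1)) := by
    rw [← rpow_add (by linarith)]; ring_nf
  have hq : 0 ≤ (1 - u) ^ (p / (p - 1)) := rpow_nonneg (by linarith) _
  have := sub_rpow_le_denominator (p := p) (rpow_nonneg hu0.le (p - 1))
    (rpow_le_self_of_le_one hu0.le hu1.le (by linarith)) hu1.le (by linarith)
    (div_sub_one_pos (by linarith : 1 < p)).le (div_sub_one_lt_two hp).le
  nlinarith

lemma f_nonneg_and_le (hsmall : (1 - u) ^ (p - p / (p - 1)) ≤ 1 / 8) :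
    0 ≤ f p u ∧ f p u ≤ 8 * 2 ^ p * (1 - u) ^ (p - p / (p - 1)) := by
  obtain ⟨hN0, hN⟩ := f_numerator_nonneg_and_le hp hu0 hu1
  have hD := half_rpow_le_f_denominator hp hu0 hu1 hsmall
  have hq : 0 < (1 - u) ^ (p / (p - 1)) := rpow_pos_of_pos (by linarith) _
  have hsplit : (1 - u) ^ p = (1 - u) ^ (p / (p - 1)) * (1 - u) ^ (p - p / (p - 1)) := by
    rw [← rpow_add (by linarith)]; ring_nf
  refine ⟨div_nonneg hN0 (by linarith), ?_⟩
  calc f p u ≤ 2 ^ p * (1 - u) ^ p * 4 / ((1 - u) ^ (p / (p - 1)) / 2) :=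
        div_le_div₀ (by positivity) hN (by positivity) hD
    _ = 8 * 2 ^ p * (1 - u) ^ (p - p / (p - 1)) := by
        rw [hsplit]; field_simp; ring

end Bounds

theorem stmt_10 (p : ℝ) (hp : 2 < p) :
    Filter.Tendsto (f p) (nhdsWithin 1 (Set.Ioo 0 1)) (nhds 0) := by
  have hlim := (tendsto_one_sub_rpow_nhds_one (sub_pos.2 (div_sub_one_lt_self hp))).mono_left
    (nhdsWithin_le_nhds (s := Ioo 0 1))
  have hbound : ∀ᶠ u in 𝓝[Ioo 0 1] 1,
      0 ≤ f p u ∧ f p u ≤ 8 * 2 ^ p * (1 - u) ^ (p - p / (p - 1)) := by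
    filter_upwards [self_mem_nhdsWithin, hlim.eventually_lt_const (by norm_num : (0 : ℝ) < 1 / 8)]
      with u ⟨hu0, hu1⟩ hsmall
    exact f_nonneg_and_le hp hu0 hu1 hsmall.le
  refine squeeze_zero' (hbound.mono fun _ h => h.1) (hbound.mono fun _ h => h.2) ?_
  simpa using hlim.const_mul (8 * 2 ^ p)
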